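/- Let F : F_{p^n} → F_{p^n} be an (n,n)-function. If there exists c ∈ F_{p^n}, c ≠ 0, such that the algebraic degree of the component function Tr(cF) is neither 0, 1, nor equal to the algebraic degree of F, then F is not EA-equivalent to any power function x ↦ x^s. -/

import Mathlib

/-!
Over a finite field `K` of characteristic `p` with `q` elements, the function of a polynomial of
degree `< q` has algebraic degree equal to the largest `p`-weight of its exponents. The upper bound
is the binomial expansion read through Kummer's theorem. For the lower bound, every exponent
`e ≠ 0` of `P` leaves the monomial `X ^ (e - p ^ vₚ(e))` in some derivative `P (X + γ) - P X`
(its binomial coefficient is a unit by Kummer), and that exponent has weight one less, so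
induction on the degree applies.

An additive `ψ : K → K` has degree `1`, so it is a linearized polynomial `∑ aᵢ z ^ pⁱ`, and
`ψ (y ^ s)` is a combination of the monomials `y ^ (s pⁱ)` reduced modulo `y ^ q - y`. Frobenius
does not change degrees, so all of these have the weight `d°(x ^ s)`, and `ψ (y ^ s)` has degree
`0` or `d°(x ^ s)`. An EA-equivalence `x ^ s = A₁ (F (A₂ x)) + A₃ x` preserves every bound
`degLE · d` with `d ≥ 1` and turns the component `Tr (c F)` into a component of `x ^ s`; so a
component degree outside `{0, 1}` equals `d°(x ^ s) = d°(F)`.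
-/

/-- A function has algebraic degree at most `d` iff all `(d+1)`-fold discrete
derivatives vanish identically. -/
def degLE {V W : Type*} [AddCommGroup V] [AddCommGroup W] : (V → W) → ℕ → Prop
  | F, 0 => ∀ γ x, F (x + γ) - F x = 0
  | F, (d + 1) => ∀ γ, degLE (fun x => F (x + γ) - F x) d

/-- The algebraic degree of a function. -/
noncomputable def algDeg {V W : Type*} [AddCommGroup V] [AddCommGroup W] (F : V → W) : ℕ :=
  sInf {d | degLE F d}

/-- An `F_p`-affine map. -/
def IsAffineMap (R : Type*) {V W : Type*} [CommSemiring R] [AddCommGroup V] [AddCommGroup W]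
    [Module R V] [Module R W] (A : V → W) : Prop :=
  ∃ (L : V →ₗ[R] W) (c : W), ∀ x, A x = L x + c

/-- EA-equivalence of `(n,n)`-functions: `F' = A₁ ∘ F ∘ A₂ + A₃` with `A₁, A₂`
affine permutations and `A₃` affine. -/
def EAequiv (p n : ℕ) [Fact p.Prime]
    (F F' : GaloisField p n → GaloisField p n) : Prop :=
  ∃ A₁ A₂ A₃ : GaloisField p n → GaloisField p n,
    IsAffineMap (ZMod p) A₁ ∧ Function.Bijective A₁ ∧
    IsAffineMap (ZMod p) A₂ ∧ Function.Bijective A₂ ∧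
    IsAffineMap (ZMod p) A₃ ∧
    ∀ x, F' x = A₁ (F (A₂ x)) + A₃ x

open Function

section DegLE

variable {V V' W W' : Type*} [AddCommGroup V] [AddCommGroup V'] [AddCommGroup W]
  [AddCommGroup W']

theorem degLE_const (w : W) (d : ℕ) : degLE (fun _ : V => w) d := by
  induction d generalizing w with
  | zero => intro γ x; exact sub_self w
  | succ d ih => intro γ; simpa only [sub_self] using ih 0

theorem degLE.add {f g : V → W} {d : ℕ} (hf : degLE f d) (hg : degLE g d) :
    degLE (fun x => f x + g x) d := by
  induction d generalizing f g with
  | zero => intro γ x; rw [add_sub_add_comm, hf γ x, hg γ x, add_zero]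
  | succ d ih => intro γ; simpa only [add_sub_add_comm] using ih (hf γ) (hg γ)

theorem degLE.sub {f g : V → W} {d : ℕ} (hf : degLE f d) (hg : degLE g d) :
    degLE (fun x => f x - g x) d := by
  induction d generalizing f g with
  | zero => intro γ x; rw [sub_sub_sub_comm, hf γ x, hg γ x, sub_zero]
  | succ d ih => intro γ; simpa only [sub_sub_sub_comm] using ih (hf γ) (hg γ)

theorem degLE.succ {f : V → W} {d : ℕ} (hf : degLE f d) : degLE f (d + 1) := by
  induction d generalizing f with
  | zero => intro γ; simpa only [hf γ] using degLE_const (0 : W) 0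
  | succ d ih => intro γ; exact ih (hf γ)

theorem degLE.mono {f : V → W} {d d' : ℕ} (hf : degLE f d) (h : d ≤ d') : degLE f d' := by
  induction h with
  | refl => exact hf
  | step _ ih => exact ih.succ

theorem degLE_sum {ι : Type*} (t : Finset ι) {f : ι → V → W} {d : ℕ}
    (h : ∀ i ∈ t, degLE (f i) d) : degLE (fun x => ∑ i ∈ t, f i x) d := by
  classical
  induction t using Finset.induction_on with
  | empty => simpa only [Finset.sum_empty] using degLE_const (0 : W) d
  | insert a t ha ih =>
    simp only [Finset.sum_insert ha]
    exact (h a (Finset.mem_insert_self a t)).add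
      (ih fun i hi => h i (Finset.mem_insert_of_mem hi))

theorem degLE.map (φ : W →+ W') {f : V → W} {d : ℕ} (hf : degLE f d) :
    degLE (fun x => φ (f x)) d := by
  induction d generalizing f with
  | zero => intro γ x; rw [← map_sub, hf γ x, map_zero]
  | succ d ih => intro γ; simpa only [map_sub] using ih (hf γ)

theorem degLE_map_iff {φ : W →+ W'} (hφ : Injective φ) {f : V → W} {d : ℕ} :
    degLE (fun x => φ (f x)) d ↔ degLE f d := by
  refine ⟨fun h => ?_, degLE.map φ⟩
  induction d generalizing f with
  | zero => intro γ x; exact hφ (by rw [map_sub, h γ x, map_zero])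
  | succ d ih => intro γ; exact ih (by simpa only [map_sub] using h γ)

theorem degLE.comp_add (L : V' →+ V) (b : V) {f : V → W} {d : ℕ} (hf : degLE f d) :
    degLE (fun x => f (L x + b)) d := by
  induction d generalizing f with
  | zero => intro γ x; simpa only [map_add, add_right_comm] using hf (L γ) (L x + b)
  | succ d ih => intro γ; simpa only [map_add, add_right_comm] using ih (hf (L γ))

theorem degLE_comp_add_iff {L : V' →+ V} (hL : Surjective L) (b : V) {f : V → W} {d : ℕ} :
    degLE (fun x => f (L x + b)) d ↔ degLE f d := by
  refine ⟨fun h => ?_, degLE.comp_add L b⟩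
  induction d generalizing f with
  | zero =>
    intro γ x
    obtain ⟨γ, rfl⟩ := hL γ
    obtain ⟨x', hx'⟩ := hL (x - b)
    rw [← sub_add_cancel x b, ← hx']
    simpa only [map_add, add_right_comm] using h γ x'
  | succ d ih =>
    intro γ
    obtain ⟨γ, rfl⟩ := hL γ
    exact ih (by simpa only [map_add, add_right_comm] using h γ)

theorem degLE_addMonoidHom (φ : V →+ W) : degLE φ 1 := by
  intro γ
  simpa only [map_add, add_sub_cancel_left] using degLE_const (φ γ) 0

theorem IsAffineMap.degLE_one {R : Type*} [CommSemiring R] [Module R V] [Module R W]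
    {A : V → W} (hA : IsAffineMap R A) : degLE A 1 := by
  obtain ⟨L, c, hA⟩ := hA
  rw [funext hA]
  exact (degLE_addMonoidHom L.toAddMonoidHom).add (degLE_const c 1)

theorem degLE_add_iff {f a : V → W} (ha : degLE a 1) {d : ℕ} (hd : 1 ≤ d) :
    degLE (fun x => f x + a x) d ↔ degLE f d :=
  ⟨fun h => by simpa only [add_sub_cancel_right] using h.sub (ha.mono hd),
    fun h => h.add (ha.mono hd)⟩

theorem degLE_iff_of_eq_comp_add {F : V → W} {G : V' → W'} {L₁ : W →+ W'} (hL₁ : Injective L₁)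
    {L₂ : V' →+ V} (hL₂ : Surjective L₂) (b : V) {a : V' → W'} (ha : degLE a 1)
    (hG : ∀ x, G x = L₁ (F (L₂ x + b)) + a x) {d : ℕ} (hd : 1 ≤ d) :
    degLE G d ↔ degLE F d := by
  rw [funext hG, degLE_add_iff ha hd, degLE_map_iff hL₁, degLE_comp_add_iff hL₂]

theorem algDeg_le {f : V → W} {d : ℕ} (h : degLE f d) : algDeg f ≤ d :=
  Nat.sInf_le h

theorem degLE_algDeg {f : V → W} {d : ℕ} (h : degLE f d) : degLE f (algDeg f) :=
  Nat.sInf_mem ⟨d, h⟩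

theorem algDeg_map_of_injective {φ : W →+ W'} (hφ : Injective φ) (f : V → W) :
    algDeg (fun x => φ (f x)) = algDeg f := by
  simp only [algDeg, degLE_map_iff hφ]

theorem algDeg_eq_of_degLE_iff {f : V → W} {g : V' → W'}
    (h : ∀ d, 1 ≤ d → (degLE f d ↔ degLE g d)) (hg : 2 ≤ algDeg g) : algDeg f = algDeg g := by
  have hg' : degLE g (algDeg g) :=
    Nat.sInf_mem (Nat.nonempty_of_pos_sInf (by unfold algDeg at hg; omega))
  have hf : degLE f (algDeg g) := (h _ (by omega)).2 hg'
  refine le_antisymm (algDeg_le hf) (not_lt.1 fun hlt => ?_)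
  have := (h (max (algDeg f) 1) (le_max_right _ _)).1 ((degLE_algDeg hf).mono (le_max_left _ _))
  have := algDeg_le this
  omega

theorem algDeg_eq_of_eq_comp_add {F : V → W} {G : V' → W'} {L₁ : W →+ W'} (hL₁ : Injective L₁)
    {L₂ : V' →+ V} (hL₂ : Surjective L₂) (b : V) {a : V' → W'} (ha : degLE a 1)
    (hG : ∀ x, G x = L₁ (F (L₂ x + b)) + a x) (h2 : 2 ≤ algDeg G ∨ 2 ≤ algDeg F) :
    algDeg G = algDeg F := by
  have h := fun d (hd : 1 ≤ d) => degLE_iff_of_eq_comp_add hL₁ hL₂ b ha hG hd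
  rcases h2 with h2 | h2
  · exact (algDeg_eq_of_degLE_iff (fun d hd => (h d hd).symm) h2).symm
  · exact algDeg_eq_of_degLE_iff h h2

end DegLE

theorem bijective_of_eq_add_const {α W : Type*} [AddGroup W] {f L : α → W} {b : W}
    (h : ∀ x, f x = L x + b) (hf : Bijective f) : Bijective L := by
  rw [show f = (Equiv.addRight b) ∘ L from funext h] at hf
  exact (Bijective.of_comp_iff' (Equiv.addRight b).bijective L).mp hf

def pWeight (p n : ℕ) : ℕ := (p.digits n).sum

section PWeight

variable {p : ℕ}

theorem pWeight_zero : pWeight p 0 = 0 := by simp [pWeight]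

theorem pWeight_eq_zero_iff {n : ℕ} : pWeight p n = 0 ↔ n = 0 := by
  refine ⟨fun h => by_contra fun hn => ?_, fun h => by rw [h, pWeight_zero]⟩
  have hne := Nat.getLast_digit_ne_zero p hn
  exact hne (List.sum_eq_zero_iff.mp h _ (List.getLast_mem _))

variable [hp : Fact p.Prime]

theorem pWeight_add_mul {r : ℕ} (hr : r < p) (t : ℕ) :
    pWeight p (r + p * t) = r + pWeight p t := by
  by_cases h : r = 0 ∧ t = 0
  · simp [h.1, h.2, pWeight_zero]
  · rw [pWeight, Nat.digits_add p hp.out.one_lt r t hr (by tauto), List.sum_cons, pWeight]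

theorem pWeight_pow_mul (i m : ℕ) : pWeight p (p ^ i * m) = pWeight p m := by
  rcases eq_or_ne m 0 with rfl | hm
  · simp
  · simp [pWeight, Nat.digits_base_pow_mul hp.out.one_lt (Nat.pos_of_ne_zero hm)]

theorem pWeight_pow (i : ℕ) : pWeight p (p ^ i) = 1 := by
  simpa [pWeight, Nat.digits_of_lt p 1 one_ne_zero hp.out.one_lt] using
    pWeight_pow_mul (p := p) i 1

theorem pWeight_pred_add_one {m : ℕ} (hm : ¬ p ∣ m) : pWeight p (m - 1) + 1 = pWeight p m := by
  have hpos : 0 < m % p := Nat.pos_of_ne_zero (hm ∘ Nat.dvd_of_mod_eq_zero)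
  have hlt : m % p < p := Nat.mod_lt m hp.out.pos
  have hpred : m - 1 = (m % p - 1) + p * (m / p) := by have := Nat.mod_add_div m p; omega
  have hm' := pWeight_add_mul hlt (m / p)
  rw [Nat.mod_add_div] at hm'
  rw [hpred, pWeight_add_mul (by omega), hm']
  omega

theorem pWeight_sub_ordProj_add_one {e : ℕ} (he : e ≠ 0) :
    pWeight p (e - ordProj[p] e) + 1 = pWeight p e := by
  have hself : ordProj[p] e * ordCompl[p] e = e := Nat.ordProj_mul_ordCompl_eq_self e p
  have hsub : e - ordProj[p] e = ordProj[p] e * (ordCompl[p] e - 1) := by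
    rw [Nat.mul_sub_one, hself]
  rw [hsub, pWeight_pow_mul, pWeight_pred_add_one (Nat.not_dvd_ordCompl hp.out he),
    ← pWeight_pow_mul (e.factorization p), hself]

theorem exists_eq_pow_of_pWeight_eq_one {e : ℕ} (h : pWeight p e = 1) : ∃ i, e = p ^ i := by
  have he : e ≠ 0 := by rintro rfl; simp [pWeight_zero] at h
  have hsub := pWeight_sub_ordProj_add_one (p := p) he
  rw [h, Nat.add_eq_right, pWeight_eq_zero_iff, Nat.sub_eq_zero_iff_le] at hsub
  exact ⟨_, (hsub.antisymm (Nat.ordProj_le p he))⟩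

theorem not_dvd_choose_iff_pWeight_add_le {k e : ℕ} (hk : k ≤ e) :
    ¬ p ∣ e.choose k ↔ pWeight p k + pWeight p (e - k) ≤ pWeight p e := by
  have hkummer := sub_one_mul_padicValNat_choose_eq_sub_sum_digits (p := p) hk
  have hp1 : p - 1 ≠ 0 := by have := hp.out.two_le; omega
  rw [pWeight, pWeight, pWeight, ← Nat.sub_eq_zero_iff_le, ← hkummer, mul_eq_zero,
    or_iff_right hp1, padicValNat.eq_zero_iff]
  simp [hp.out.ne_one, (Nat.choose_pos hk).ne']

theorem not_dvd_choose_sub_ordProj {e : ℕ} (he : e ≠ 0) :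
    ¬ p ∣ e.choose (e - ordProj[p] e) := by
  rw [not_dvd_choose_iff_pWeight_add_le (Nat.sub_le _ _), Nat.sub_sub_self (Nat.ordProj_le p he),
    pWeight_pow, pWeight_sub_ordProj_add_one he]

end PWeight

open Polynomial

section CharP

variable {p : ℕ} [Fact p.Prime] {K : Type*} [Field K] [CharP K p]

theorem degLE_pow (e : ℕ) : degLE (fun x : K => x ^ e) (pWeight p e) := by
  induction e using Nat.strong_induction_on with
  | _ e ih =>
  rcases eq_or_ne e 0 with rfl | he
  · simpa only [pWeight_zero, pow_zero] using degLE_const (1 : K) 0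
  obtain ⟨d, hd⟩ :=
    Nat.exists_eq_add_one.mpr (Nat.pos_of_ne_zero (pWeight_eq_zero_iff.not.mpr he))
  rw [hd]
  intro γ
  have hexp : ∀ x : K, (x + γ) ^ e - x ^ e =
      ∑ k ∈ Finset.range e, x ^ k * γ ^ (e - k) * (e.choose k : K) := fun x => by
    rw [add_pow, Finset.sum_range_succ, Nat.sub_self, pow_zero, Nat.choose_self, Nat.cast_one,
      mul_one, mul_one, add_sub_cancel_right]
  simp only [hexp, mul_assoc]
  refine degLE_sum _ fun k hk => ?_
  have hk : k < e := Finset.mem_range.mp hk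
  by_cases hdvd : p ∣ e.choose k
  · simpa only [(CharP.cast_eq_zero_iff K p _).mpr hdvd, mul_zero] using degLE_const (0 : K) d
  · have hweight := (not_dvd_choose_iff_pWeight_add_le hk.le).mp hdvd
    have hpos := pWeight_eq_zero_iff (p := p).not.mpr (Nat.sub_ne_zero_of_lt hk)
    exact ((ih k hk).mono (d' := d) (by omega)).map (AddMonoidHom.mulRight _)

theorem degLE_eval_of_forall_pWeight_le {P : K[X]} {d : ℕ}
    (h : ∀ e ∈ P.support, pWeight p e ≤ d) : degLE (fun x => P.eval x) d := by
  simp only [eval_eq_sum, Polynomial.sum_def]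
  exact degLE_sum _ fun e he =>
    ((degLE_pow e).mono (h e he)).map (AddMonoidHom.mulLeft (P.coeff e))

theorem algDeg_pow_mul_pow_char (s i : ℕ) :
    algDeg (fun y : K => y ^ (s * p ^ i)) = algDeg (fun y : K => y ^ s) := by
  simp only [pow_mul]
  exact algDeg_map_of_injective (φ := (iterateFrobenius K p i).toAddMonoidHom)
    (iterateFrobenius K p i).injective (fun y => y ^ s)

end CharP

section FiniteField

variable {K : Type*} [Field K] [Fintype K]

theorem exists_natDegree_lt_card_eval_eq (f : K → K) :
    ∃ P : K[X], P.natDegree < Fintype.card K ∧ ∀ x, P.eval x = f x := by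
  classical
  refine ⟨Lagrange.interpolate Finset.univ id f, ?_,
    fun x => Lagrange.eval_interpolate_at_node f (Set.injOn_id _) (Finset.mem_univ x)⟩
  rcases eq_or_ne (Lagrange.interpolate Finset.univ id f) 0 with h | h
  · rw [h, natDegree_zero]; exact Fintype.card_pos
  · rw [natDegree_lt_iff_degree_lt h, ← Finset.card_univ]
    exact Lagrange.degree_interpolate_lt f (Set.injOn_id _)

theorem exists_lt_card_forall_pow_eq (n : ℕ) :
    ∃ k < Fintype.card K, ∀ y : K, y ^ n = y ^ k := by
  induction n using Nat.strong_induction_on with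
  | _ n ih =>
  by_cases hn : n < Fintype.card K
  · exact ⟨n, hn, fun _ => rfl⟩
  have hq := Fintype.one_lt_card (α := K)
  obtain ⟨k, hk, hpow⟩ := ih (n - Fintype.card K + 1) (by omega)
  refine ⟨k, hk, fun y => ?_⟩
  calc y ^ n = y ^ (n - Fintype.card K) * y ^ Fintype.card K := by
        rw [← pow_add, Nat.sub_add_cancel (not_lt.mp hn)]
    _ = y ^ k := by rw [FiniteField.pow_card, ← pow_succ, hpow]

variable {p : ℕ} [Fact p.Prime] [CharP K p]

theorem exists_mem_support_taylor_sub {P : K[X]} (hP : P.natDegree < Fintype.card K) {e : ℕ}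
    (he : e ∈ P.support) (he0 : e ≠ 0) : ∃ γ, e - ordProj[p] e ∈ (taylor γ P - P).support := by
  set k := e - ordProj[p] e
  have hk : k < e := Nat.sub_lt (Nat.pos_of_ne_zero he0) (Nat.ordProj_pos e p)
  -- `Q.eval γ` is the coefficient of `X ^ k` in `P (X + γ) - P X`
  set Q := hasseDeriv k P - C (P.coeff k)
  have hQ : Q.coeff (e - k) ≠ 0 := by
    rw [coeff_sub, coeff_C, if_neg (by omega), sub_zero, hasseDeriv_coeff,
      Nat.sub_add_cancel hk.le]
    refine mul_ne_zero (fun h => not_dvd_choose_sub_ordProj (p := p) he0 ?_)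
      (mem_support_iff.mp he)
    exact (CharP.cast_eq_zero_iff K p _).mp h
  have hQdeg : Q.natDegree < Fintype.card K :=
    (natDegree_sub_le _ _).trans_lt (max_lt ((natDegree_hasseDeriv_le P k).trans_lt (by omega))
      (by rw [natDegree_C]; exact Fintype.card_pos))
  obtain ⟨γ, hγ⟩ : ∃ γ, Q.eval γ ≠ 0 := by
    by_contra! h
    exact hQ (by
      rw [eq_zero_of_natDegree_lt_card_of_eval_eq_zero Q injective_id h hQdeg, coeff_zero])
  refine ⟨γ, ?_⟩
  rwa [mem_support_iff, coeff_sub, taylor_coeff, ← eval_C (a := P.coeff k) (x := γ), ← eval_sub]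

theorem pWeight_le_of_degLE_eval {P : K[X]} (hP : P.natDegree < Fintype.card K) {d : ℕ}
    (h : degLE (fun x => P.eval x) d) {e : ℕ} (he : e ∈ P.support) : pWeight p e ≤ d := by
  have hdeg : ∀ {P : K[X]} γ, P.natDegree < Fintype.card K →
      (taylor γ P - P).natDegree < Fintype.card K := fun γ hP =>
    (natDegree_sub_le _ _).trans_lt (by rwa [natDegree_taylor, max_self])
  induction d generalizing P e with
  | zero =>
    refine Nat.le_zero.mpr (pWeight_eq_zero_iff.mpr (by_contra fun he0 => ?_))
    obtain ⟨γ, hγ⟩ := exists_mem_support_taylor_sub hP he he0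
    have hzero : taylor γ P - P = 0 :=
      eq_zero_of_natDegree_lt_card_of_eval_eq_zero _ injective_id
        (fun x => by simpa only [eval_sub, taylor_eval, id] using h γ x) (hdeg γ hP)
    simp [hzero] at hγ
  | succ d ih =>
    rcases eq_or_ne e 0 with rfl | he0
    · simp [pWeight_zero]
    obtain ⟨γ, hγ⟩ := exists_mem_support_taylor_sub hP he he0
    have hk := ih (hdeg γ hP) (by simpa only [eval_sub, taylor_eval] using h γ) hγ
    have := pWeight_sub_ordProj_add_one (p := p) he0
    omega

theorem algDeg_eval {P : K[X]} (hP : P.natDegree < Fintype.card K) :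
    algDeg (fun x => P.eval x) = P.support.sup (pWeight p) := by
  have hsup : degLE (fun x => P.eval x) (P.support.sup (pWeight p)) :=
    degLE_eval_of_forall_pWeight_le fun e he => Finset.le_sup he
  exact le_antisymm (algDeg_le hsup)
    (Finset.sup_le fun _ he => pWeight_le_of_degLE_eval hP (degLE_algDeg hsup) he)

theorem algDeg_eval_eq_zero_or_eq {P : K[X]} (hP : P.natDegree < Fintype.card K) {w : ℕ}
    (hw : ∀ e ∈ P.support, pWeight p e = w) :
    algDeg (fun x => P.eval x) = 0 ∨ algDeg (fun x => P.eval x) = w := by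
  rw [algDeg_eval hP]
  rcases P.support.eq_empty_or_nonempty with h | ⟨e, he⟩
  · simp [h]
  · exact Or.inr <|
      le_antisymm (Finset.sup_le fun e he => (hw e he).le) (hw e he ▸ Finset.le_sup he)

theorem algDeg_pow_of_lt_card {k : ℕ} (hk : k < Fintype.card K) :
    algDeg (fun y : K => y ^ k) = pWeight p k := by
  simpa [support_X_pow] using algDeg_eval (P := (X ^ k : K[X])) (by rwa [natDegree_X_pow])

theorem exists_eq_pow_of_mem_support {ψ : K →+ K} {P : K[X]} (hP : P.natDegree < Fintype.card K)
    (hPψ : ∀ x, P.eval x = ψ x) {e : ℕ} (he : e ∈ P.support) : ∃ i, e = p ^ i := by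
  refine exists_eq_pow_of_pWeight_eq_one (le_antisymm ?_ ?_)
  · exact pWeight_le_of_degLE_eval hP (by simpa only [hPψ] using degLE_addMonoidHom ψ) he
  · refine Nat.pos_of_ne_zero (pWeight_eq_zero_iff.not.mpr fun he0 => ?_)
    rw [he0, mem_support_iff, coeff_zero_eq_eval_zero, hPψ, map_zero] at he
    exact he rfl

theorem exists_eval_eq_comp_pow (ψ : K →+ K) (s : ℕ) :
    ∃ H : K[X], H.natDegree < Fintype.card K ∧ (∀ y, H.eval y = ψ (y ^ s)) ∧
      ∀ j ∈ H.support, ∃ i, ∀ y : K, y ^ j = y ^ (s * p ^ i) := by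
  classical
  obtain ⟨P, hP, hPψ⟩ := exists_natDegree_lt_card_eval_eq ψ
  choose k hk hpow using fun e => exists_lt_card_forall_pow_eq (K := K) (s * e)
  refine ⟨∑ e ∈ P.support, C (P.coeff e) * X ^ k e, ?_, fun y => ?_, fun j hj => ?_⟩
  · have := Fintype.card_pos (α := K)
    refine lt_of_le_of_lt (natDegree_sum_le_of_forall_le _ _ (n := Fintype.card K - 1)
      fun e _ => (natDegree_C_mul_X_pow_le _ _).trans (by have := hk e; omega)) (by omega)
  · rw [eval_finsetSum, ← hPψ, eval_eq_sum, Polynomial.sum_def]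
    refine Finset.sum_congr rfl fun e _ => ?_
    rw [eval_mul, eval_C, eval_pow, eval_X, ← hpow, pow_mul]
  · rw [mem_support_iff, finsetSum_coeff] at hj
    obtain ⟨e, he, hne⟩ := Finset.exists_ne_zero_of_sum_ne_zero hj
    rw [coeff_C_mul_X_pow] at hne
    obtain ⟨i, rfl⟩ := exists_eq_pow_of_mem_support hP hPψ he
    refine ⟨i, fun y => ?_⟩
    rw [hpow, (ite_ne_right_iff.mp hne).1]

end FiniteField

theorem algDeg_comp_pow_eq_zero_or_eq {K L : Type*} [Field K] [Fintype K] [Field L]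
    [Algebra L K] (ψ : K →+ L) (s : ℕ) :
    algDeg (fun y => ψ (y ^ s)) = 0 ∨
      algDeg (fun y => ψ (y ^ s)) = algDeg (fun y : K => y ^ s) := by
  obtain ⟨p, _⟩ := CharP.exists K
  have : Fact p.Prime := ⟨CharP.char_is_prime K p⟩
  let ι := (algebraMap L K).toAddMonoidHom
  obtain ⟨H, hH, hHψ, hsupp⟩ := exists_eval_eq_comp_pow (p := p) (ι.comp ψ) s
  have hψH : algDeg (fun y => ψ (y ^ s)) = algDeg (fun y => H.eval y) := by
    rw [← algDeg_map_of_injective (φ := ι) (algebraMap L K).injective]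
    simp only [hHψ]
    rfl
  rw [hψH]
  refine algDeg_eval_eq_zero_or_eq hH fun j hj => ?_
  obtain ⟨i, hi⟩ := hsupp j hj
  rw [← algDeg_pow_of_lt_card ((le_natDegree_of_mem_supp j hj).trans_lt hH), funext hi,
    algDeg_pow_mul_pow_char]

/-- If some component function `Tr(cF)` has algebraic degree other than `0`, `1`, or
`d°(F)`, then `F` is EA-inequivalent to every power function. -/
theorem component_degree_obstruction
    (p n : ℕ) [Fact p.Prime]
    (F : GaloisField p n → GaloisField p n)
    (hc : ∃ c : GaloisField p n, c ≠ 0 ∧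
      algDeg (fun x => Algebra.trace (ZMod p) (GaloisField p n) (c * F x)) ≠ 0 ∧
      algDeg (fun x => Algebra.trace (ZMod p) (GaloisField p n) (c * F x)) ≠ 1 ∧
      algDeg (fun x => Algebra.trace (ZMod p) (GaloisField p n) (c * F x)) ≠ algDeg F) :
    ∀ s : ℕ, ¬ EAequiv p n F (fun x => x ^ s) := by
  rintro s ⟨A₁, A₂, A₃, ⟨L₁, b₁, hA₁⟩, hA₁bij, ⟨L₂, b₂, hA₂⟩, hA₂bij, hA₃, hEA⟩
  obtain ⟨c, -, hD0, hD1, hDF⟩ := hc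
  let _ : Fintype (GaloisField p n) := Fintype.ofFinite _
  have hL₁ := bijective_of_eq_add_const hA₁ hA₁bij
  have hL₂ := bijective_of_eq_add_const hA₂ hA₂bij
  set Tr := Algebra.trace (ZMod p) (GaloisField p n)
  set φ : GaloisField p n →+ ZMod p := Tr.toAddMonoidHom.comp
    ((AddMonoidHom.mulLeft c).comp (LinearEquiv.ofBijective L₁ hL₁).symm.toAddMonoidHom)
  have hφL₁ : ∀ z, φ (L₁ z) = Tr (c * z) := fun z => by
    simp [φ, LinearEquiv.ofBijective_symm_apply_apply]
  have hpow : ∀ x, x ^ s = L₁ (F (L₂ x + b₂)) + (b₁ + A₃ x) := fun x =>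
    (hEA x).trans (by rw [hA₁, hA₂, add_assoc])
  have hcomp : ∀ x, φ (x ^ s) = AddMonoidHom.id _ (Tr (c * F (L₂ x + b₂))) + φ (b₁ + A₃ x) :=
    fun x => by rw [hpow, map_add, hφL₁]; rfl
  have ha : degLE (fun x => b₁ + A₃ x) 1 := (degLE_const b₁ 1).add hA₃.degLE_one
  have hD : algDeg (fun x => φ (x ^ s)) = algDeg (fun x => Tr (c * F x)) :=
    algDeg_eq_of_eq_comp_add (L₁ := AddMonoidHom.id _) injective_id (L₂ := L₂.toAddMonoidHom)
      hL₂.2 b₂ (ha.map φ) hcomp (Or.inr (by omega))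
  have hDpow : algDeg (fun x : GaloisField p n => x ^ s) = algDeg (fun x => Tr (c * F x)) := by
    have := algDeg_comp_pow_eq_zero_or_eq φ s
    omega
  exact hDF (hDpow ▸ algDeg_eq_of_eq_comp_add (L₁ := L₁.toAddMonoidHom) hL₁.1
    (L₂ := L₂.toAddMonoidHom) hL₂.2 b₂ ha hpow (Or.inl (by omega)))
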